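/- (Validity of the Pythagorean definition of the acute angle via the principle of the Infinite.) Let θ be a real number with 0 < θ < π. Then θ < π / 2 if and only if there exists a natural number n with n even such that θ < ω n, where ω n := Real.arccos (1 - (q n)^2 / (2 * (p n)^2)). -/

import Mathlib

/-!
For even `n` the side and diameter numbers satisfy `q n ^ 2 = 2 * p n ^ 2 - 1`, so the law of
cosines gives `cos (ω n) = 1 / (2 * p n ^ 2)`: a positive cosine, i.e. an acute angle, which tends
to `0` as `p n → ∞`. Hence the `ω n` with `n` even are acute and approach the right angle from
below, so every acute angle is exceeded by one of them.
-/

mutual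
/-- The Pythagorean side numbers. -/
def p : ℕ → ℕ
  | 0 => 1
  | n + 1 => p n + q n
/-- The Pythagorean diameter numbers. -/
def q : ℕ → ℕ
  | 0 => 1
  | n + 1 => 2 * p n + q n
end

open Real

theorem q_sq_eq (n : ℕ) : (q n : ℤ) ^ 2 = 2 * (p n : ℤ) ^ 2 + (-1) ^ (n + 1) := by
  induction n with
  | zero => simp [p, q]
  | succ n ih =>
    simp only [p, q]
    push_cast
    linear_combination -ih

theorem q_pos (n : ℕ) : 0 < q n := by
  induction n with
  | zero => simp [q]
  | succ n ih => simp only [q]; omega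

theorem lt_p (n : ℕ) : n < p n := by
  induction n with
  | zero => simp [p]
  | succ n ih => simp only [p]; linarith [q_pos n]

theorem p_pos (n : ℕ) : 0 < p n := (Nat.zero_le n).trans_lt (lt_p n)

noncomputable def ω (n : ℕ) : ℝ :=
  arccos (1 - (q n : ℝ) ^ 2 / (2 * (p n : ℝ) ^ 2))

theorem ω_of_even {n : ℕ} (hn : Even n) : ω n = arccos (2 * (p n : ℝ) ^ 2)⁻¹ := by
  have hp : (0 : ℝ) < p n := by exact_mod_cast p_pos n
  have hq : (q n : ℝ) ^ 2 = 2 * (p n : ℝ) ^ 2 - 1 := by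
    have := q_sq_eq n
    rw [hn.add_one.neg_one_pow] at this
    exact_mod_cast this
  rw [ω, hq]
  congr 1
  field_simp
  ring

theorem ω_lt_pi_div_two {n : ℕ} (hn : Even n) : ω n < π / 2 := by
  rw [ω_of_even hn, arccos_lt_pi_div_two]
  have := p_pos n
  positivity

theorem exists_even_inv_two_mul_p_sq_lt {c : ℝ} (hc : 0 < c) :
    ∃ n, Even n ∧ (2 * (p n : ℝ) ^ 2)⁻¹ < c := by
  obtain ⟨m, hm⟩ := exists_nat_gt c⁻¹
  refine ⟨2 * m, even_two_mul m, ?_⟩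
  have hp : (1 : ℝ) ≤ p (2 * m) := by exact_mod_cast p_pos (2 * m)
  have hmp : (m : ℝ) < p (2 * m) := by exact_mod_cast (by have := lt_p (2 * m); omega)
  calc (2 * (p (2 * m) : ℝ) ^ 2)⁻¹ ≤ (p (2 * m) : ℝ)⁻¹ := inv_anti₀ (by positivity) (by nlinarith)
    _ < c := (inv_lt_comm₀ (by positivity) hc).2 (hm.trans hmp)

/-- The Pythagorean definition of the acute angle: an angle is acute iff it is less than
some ω n with n even. -/
theorem acute_iff_lt_omega_even (θ : ℝ) (h0 : 0 < θ) (hπ : θ < Real.pi) :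
    θ < Real.pi / 2 ↔
      ∃ n : ℕ, Even n ∧ θ < Real.arccos (1 - ((q n : ℝ)) ^ 2 / (2 * ((p n : ℝ)) ^ 2)) := by
  change θ < π / 2 ↔ ∃ n, Even n ∧ θ < ω n
  constructor
  · intro hθ
    obtain ⟨n, hn, hlt⟩ :=
      exists_even_inv_two_mul_p_sq_lt (cos_pos_of_mem_Ioo ⟨by linarith [pi_pos], hθ⟩)
    refine ⟨n, hn, ?_⟩
    calc θ = arccos (cos θ) := (arccos_cos h0.le hπ.le).symm
      _ < arccos (2 * (p n : ℝ) ^ 2)⁻¹ :=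
          arccos_lt_arccos (neg_one_lt_zero.le.trans (by positivity)) hlt (cos_le_one θ)
      _ = ω n := (ω_of_even hn).symm
  · rintro ⟨n, hn, hθ⟩
    exact hθ.trans (ω_lt_pi_div_two hn)
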